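/- arXiv:1509.01749 — 2 statements merged into one kernel-verified Lean document; each statement's English description precedes it below -/
import Mathlib

section
/- Let R be a commutative ring and n ≥ 1. For every formal power series f ∈ R[[t₁,...,tₙ]] with constant coefficient 1 there exists a family (r_ν) of elements of R, indexed by the nonzero multi-indices ν ∈ ℕⁿ, such that f = ∏_{ν ≠ 0} (1 − r_ν t^ν), the infinite product converging in the coefficientwise topology on R[[t₁,...,tₙ]]. -/
open MvPowerSeries Finset

namespace ProdDecompAux

variable {R : Type*} [CommRing R] {n : ℕ}

noncomputable def r (R : Type*) [CommRing R] {n : ℕ} (f : MvPowerSeries (Fin n) R)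
    (ν : Fin n →₀ ℕ) : R :=
  MvPowerSeries.coeff ν
    (∏ μ ∈ (((Finset.Icc 0 ν).erase ν).subtype (fun μ => μ ≠ (0 : Fin n →₀ ℕ))).attach,
      (1 - MvPowerSeries.monomial μ.1.1 (r R f μ.1.1)))
    - MvPowerSeries.coeff ν f
termination_by ∑ i : Fin n, ν i
decreasing_by
  obtain ⟨⟨μ, hμ0⟩, hmem⟩ := μ
  have h1 : μ ∈ (Finset.Icc 0 ν).erase ν := Finset.mem_subtype.mp hmem
  have hne : μ ≠ ν := (Finset.mem_erase.mp h1).1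
  have hle : μ ≤ ν := (Finset.mem_Icc.mp (Finset.mem_erase.mp h1).2).2
  simp only
  apply Finset.sum_lt_sum
  · intro i _; exact hle i
  · by_contra hc
    push_neg at hc
    exact hne (Finsupp.ext fun i => le_antisymm (hle i) (hc i (Finset.mem_univ i)))

/-- Coefficients below `d` of a product of `1 - r_μ t^μ` with all `μ ≰ d`. -/
lemma coeff_prod_of_not_le (a : {ν : Fin n →₀ ℕ // ν ≠ 0} → R) (d : Fin n →₀ ℕ)
    (S : Finset {ν : Fin n →₀ ℕ // ν ≠ 0}) (hS : ∀ μ ∈ S, ¬ μ.1 ≤ d) :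
    ∀ e ≤ d, MvPowerSeries.coeff e (∏ μ ∈ S, (1 - MvPowerSeries.monomial μ.1 (a μ)))
      = if e = 0 then 1 else 0 := by
  classical
  induction S using Finset.induction_on with
  | empty => intro e _; simp [MvPowerSeries.coeff_one]
  | @insert μ S hx ih =>
    intro e he
    rw [Finset.prod_insert hx, sub_mul, one_mul, map_sub,
      MvPowerSeries.coeff_monomial_mul]
    rw [if_neg (fun h => hS μ (Finset.mem_insert_self _ _) (h.trans he)), sub_zero]
    exact ih (fun μ hμ => hS μ (Finset.mem_insert_of_mem hμ)) e he

lemma coeff_zero_prod (a : {ν : Fin n →₀ ℕ // ν ≠ 0} → R)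
    (S : Finset {ν : Fin n →₀ ℕ // ν ≠ 0}) :
    MvPowerSeries.coeff 0 (∏ μ ∈ S, (1 - MvPowerSeries.monomial μ.1 (a μ))) = 1 := by
  have := coeff_prod_of_not_le a 0 S (fun μ _ h => μ.2 (le_antisymm h (zero_le))) 0 le_rfl
  simpa using this

lemma coeff_mul_of_forall (d : Fin n →₀ ℕ) (P Q : MvPowerSeries (Fin n) R)
    (hQ : ∀ e ≤ d, MvPowerSeries.coeff e Q = if e = 0 then 1 else 0) :
    MvPowerSeries.coeff d (P * Q) = MvPowerSeries.coeff d P := by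
  classical
  rw [MvPowerSeries.coeff_mul]
  rw [Finset.sum_eq_single (d, 0)]
  · rw [hQ 0 (zero_le), if_pos rfl, mul_one]
  · rintro ⟨x, y⟩ hxy hne
    have hsum : x + y = d := Finset.HasAntidiagonal.mem_antidiagonal.mp hxy
    have hy : y ≤ d := hsum ▸ le_add_self
    rw [hQ y hy]
    by_cases h0 : y = 0
    · exact absurd (by simp [h0, ← hsum, Prod.ext_iff]) hne
    · rw [if_neg h0, mul_zero]
  · intro h
    exact absurd (Finset.HasAntidiagonal.mem_antidiagonal.mpr (add_zero d)) h

set_option maxHeartbeats 2000000 in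
lemma coeff_prod_eq (f : MvPowerSeries (Fin n) R)
    (hf : MvPowerSeries.constantCoeff f = 1)
    (ν : Fin n →₀ ℕ) (S : Finset {μ : Fin n →₀ ℕ // μ ≠ 0})
    (hS : ∀ (μ : Fin n →₀ ℕ) (h : μ ≠ 0), μ ≤ ν → ⟨μ, h⟩ ∈ S) :
    MvPowerSeries.coeff ν (∏ μ ∈ S, (1 - MvPowerSeries.monomial μ.1 (r R f μ.1)))
      = MvPowerSeries.coeff ν f := by
  classical
  by_cases hν : ν = 0
  · subst hν
    rw [coeff_zero_prod, MvPowerSeries.coeff_zero_eq_constantCoeff_apply, hf]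
  · rw [← Finset.prod_filter_mul_prod_filter_not S (fun μ => μ.1 ≤ ν)]
    rw [coeff_mul_of_forall ν _ _
      (coeff_prod_of_not_le _ ν _ (fun μ hμ => (Finset.mem_filter.mp hμ).2))]
    have hT : S.filter (fun μ => μ.1 ≤ ν)
        = (Finset.Icc 0 ν).subtype (fun μ => μ ≠ (0 : Fin n →₀ ℕ)) := by
      ext μ
      simp only [Finset.mem_filter, Finset.mem_subtype, Finset.mem_Icc, zero_le, true_and]
      exact ⟨fun h => h.2, fun h => ⟨hS μ.1 μ.2 h, h⟩⟩
    rw [hT]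
    have hmem : (⟨ν, hν⟩ : {μ : Fin n →₀ ℕ // μ ≠ 0})
        ∈ (Finset.Icc 0 ν).subtype (fun μ => μ ≠ (0 : Fin n →₀ ℕ)) := by
      simp [Finset.mem_subtype, Finset.mem_Icc]
    rw [← Finset.mul_prod_erase _ _ hmem]
    have herase : ((Finset.Icc 0 ν).subtype (fun μ => μ ≠ (0 : Fin n →₀ ℕ))).erase ⟨ν, hν⟩
        = ((Finset.Icc 0 ν).erase ν).subtype (fun μ => μ ≠ (0 : Fin n →₀ ℕ)) := by
      ext μ
      simp only [Finset.mem_erase, Finset.mem_subtype, Finset.mem_Icc, zero_le, true_and]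
      constructor
      · rintro ⟨hne, hle⟩; exact ⟨fun h => hne (Subtype.ext h), hle⟩
      · rintro ⟨hne, hle⟩; exact ⟨fun h => hne (congrArg Subtype.val h), hle⟩
    rw [herase]
    rw [sub_mul, one_mul, map_sub, MvPowerSeries.coeff_monomial_mul, if_pos le_rfl, tsub_self,
      coeff_zero_prod, mul_one]
    have hr : r R f ν = MvPowerSeries.coeff ν
        (∏ μ ∈ ((Finset.Icc 0 ν).erase ν).subtype (fun μ => μ ≠ (0 : Fin n →₀ ℕ)),
          (1 - MvPowerSeries.monomial μ.1 (r R f μ.1)))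
        - MvPowerSeries.coeff ν f := by
      have hprod := Finset.prod_attach
        (((Finset.Icc 0 ν).erase ν).subtype (fun μ => μ ≠ (0 : Fin n →₀ ℕ)))
        (fun x : {μ : Fin n →₀ ℕ // μ ≠ 0} =>
          (1 : MvPowerSeries (Fin n) R) - MvPowerSeries.monomial x.1 (r R f x.1))
      rw [r, hprod]
    rw [hr, sub_sub_cancel]

end ProdDecompAux



/-- The coefficientwise (product) topology on multivariate formal power series,
induced by a topology on the coefficient ring. -/
instance mvPowerSeriesPiTopology (σ : Type*) (R : Type*) [TopologicalSpace R] :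
    TopologicalSpace (MvPowerSeries σ R) :=
  Pi.topologicalSpace

/-- Every multivariate formal power series with constant coefficient `1` can be
decomposed as an infinite product `∏_{ν ≠ 0} (1 - r_ν t^ν)` over the nonzero
multi-indices `ν`, converging in the coefficientwise topology (the coefficient
ring carrying the discrete topology). -/
theorem mvPowerSeries_exists_prod_decomposition
    (R : Type*) [CommRing R] [TopologicalSpace R] [DiscreteTopology R]
    (n : ℕ) (hn : 1 ≤ n)
    (f : MvPowerSeries (Fin n) R)
    (hf : MvPowerSeries.constantCoeff f = 1) :
    ∃ r : {ν : Fin n →₀ ℕ // ν ≠ 0} → R,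
      HasProd (fun ν : {ν : Fin n →₀ ℕ // ν ≠ 0} =>
        (1 : MvPowerSeries (Fin n) R) - MvPowerSeries.monomial ν.1 (r ν)) f := by
  classical
  refine ⟨fun ν => ProdDecompAux.r R f ν.1, ?_⟩
  have key : ∀ (d : Fin n →₀ ℕ), ∀ᶠ (S : Finset {ν : Fin n →₀ ℕ // ν ≠ 0}) in Filter.atTop,
      MvPowerSeries.coeff d (∏ μ ∈ S,
        ((1 : MvPowerSeries (Fin n) R) - MvPowerSeries.monomial μ.1 (ProdDecompAux.r R f μ.1)))
        = MvPowerSeries.coeff d f := by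
    intro d
    refine Filter.eventually_atTop.mpr
      ⟨(Finset.Icc 0 d).subtype (fun μ => μ ≠ (0 : Fin n →₀ ℕ)), fun S hS => ?_⟩
    refine ProdDecompAux.coeff_prod_eq f hf d S (fun μ h hle => hS ?_)
    exact Finset.mem_subtype.mpr (Finset.mem_Icc.mpr ⟨zero_le, hle⟩)
  show Filter.Tendsto _ Filter.atTop (nhds f)
  apply tendsto_pi_nhds.mpr
  intro d
  refine Filter.Tendsto.congr' ?_ (tendsto_const_nhds :
    Filter.Tendsto (fun _ : Finset {ν : Fin n →₀ ℕ // ν ≠ 0} => f d) Filter.atTop (nhds (f d)))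
  filter_upwards [key d] with S hSd
  exact hSd.symm
end

section
/- Let R be a commutative ring and n ≥ 1. Call a nonzero multi-index μ ∈ ℕⁿ primitive if gcd(μ₁,...,μₙ) = 1. The map sending a family (f_μ)_μ, indexed by the primitive multi-indices μ and with each f_μ ∈ Λ(R) = 1 + tR[[t]], to the product ∏_μ f_μ(t^μ) ∈ Λⁿ(R) = 1 + (t₁,...,tₙ)R[[t₁,...,tₙ]] (an infinite product converging in the coefficientwise topology) is a group isomorphism from the direct product ∏_{μ primitive} Λ(R) onto Λⁿ(R). In particular, the group of big Witt vectors in n variables is canonically isomorphic to an infinite product of copies of the group of big Witt vectors in one variable. -/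
open Classical in
/-- Substitution of the monomial `t^ν = t₁^{ν₁}⋯tₙ^{νₙ}` for `t` in a one-variable
formal power series `f = Σᵢ aᵢ tⁱ`: the result is `f(t^ν) = Σᵢ aᵢ t^{iν}`. -/
noncomputable def substMonomial {R : Type*} [CommRing R] {n : ℕ}
    (ν : Fin n →₀ ℕ) (f : PowerSeries R) : MvPowerSeries (Fin n) R :=
  fun d => if h : ∃ i : ℕ, d = i • ν then PowerSeries.coeff h.choose f else 0

/-- `Λ(R) = 1 + tR[[t]]`: the multiplicative (sub)monoid of one-variable formal
power series with constant coefficient `1`. -/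
def Lambda (R : Type*) [CommRing R] : Submonoid (PowerSeries R) where
  carrier := {f | PowerSeries.constantCoeff f = 1}
  one_mem' := by simp
  mul_mem' := by
    intro a b ha hb
    simp only [Set.mem_setOf_eq, map_mul] at *
    rw [ha, hb, mul_one]

/-- `Λⁿ(R) = 1 + (t₁,…,tₙ)R[[t₁,…,tₙ]]`: the multiplicative (sub)monoid of
`n`-variable formal power series with constant coefficient `1`. -/
def LambdaN (n : ℕ) (R : Type*) [CommRing R] : Submonoid (MvPowerSeries (Fin n) R) where
  carrier := {f | MvPowerSeries.constantCoeff f = 1}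
  one_mem' := by simp
  mul_mem' := by
    intro a b ha hb
    simp only [Set.mem_setOf_eq, map_mul] at *
    rw [ha, hb, mul_one]

/-- A nonzero multi-index `μ ∈ ℕⁿ` is primitive if `gcd(μ₁,…,μₙ) = 1`. -/
def IsPrimitive {n : ℕ} (μ : Fin n →₀ ℕ) : Prop :=
  Finset.univ.gcd ⇑μ = 1

open MvPowerSeries Finsupp

section MultiIndex

variable {σ : Type*}

theorem degree_nsmul (i : ℕ) (ν : σ →₀ ℕ) : degree (i • ν) = i * degree ν :=
  map_nsmul degree i ν

theorem nsmul_left_injective_of_ne_zero {ν : σ →₀ ℕ} (hν : ν ≠ 0) :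
    Function.Injective fun i : ℕ => i • ν := fun i j h => by
  have hdeg : 0 < degree ν := Nat.pos_of_ne_zero ((degree_eq_zero_iff ν).not.mpr hν)
  simpa [degree_nsmul, hdeg.ne'] using congrArg degree h

end MultiIndex

section SubstMonomial

variable {R : Type*} [CommRing R] {n : ℕ} {ν : Fin n →₀ ℕ}

theorem coeff_substMonomial_nsmul (hν : ν ≠ 0) (i : ℕ) (f : PowerSeries R) :
    coeff (i • ν) (substMonomial ν f) = PowerSeries.coeff i f := by
  have hex : ∃ j : ℕ, i • ν = j • ν := ⟨i, rfl⟩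
  rw [coeff_apply, substMonomial, dif_pos hex]
  exact congrArg (PowerSeries.coeff · f) (nsmul_left_injective_of_ne_zero hν hex.choose_spec).symm

theorem coeff_substMonomial_of_forall_ne {d : Fin n →₀ ℕ} (hd : ∀ i : ℕ, d ≠ i • ν)
    (f : PowerSeries R) : coeff d (substMonomial ν f) = 0 := by
  rw [coeff_apply, substMonomial, dif_neg (not_exists.mpr hd)]

theorem hasSubst_monomial_one (hν : ν ≠ 0) : PowerSeries.HasSubst (monomial ν (1 : R)) :=
  .of_constantCoeff_zero (by rw [← coeff_zero_eq_constantCoeff_apply, coeff_monomial_ne hν.symm])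

theorem substMonomial_eq_substAlgHom (hν : ν ≠ 0) :
    substMonomial (R := R) ν = PowerSeries.substAlgHom (hasSubst_monomial_one hν) := by
  ext f d
  rw [PowerSeries.coe_substAlgHom, PowerSeries.coeff_subst (hasSubst_monomial_one hν)]
  simp only [monomial_pow, one_pow, coeff_monomial, smul_eq_mul, mul_ite, mul_one, mul_zero]
  by_cases hd : ∃ i : ℕ, d = i • ν
  · obtain ⟨i, rfl⟩ := hd
    rw [coeff_substMonomial_nsmul hν, finsum_eq_single _ i fun j hj =>
      if_neg fun h => hj (nsmul_left_injective_of_ne_zero hν h).symm, if_pos rfl]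
  · rw [not_exists] at hd
    rw [coeff_substMonomial_of_forall_ne hd,
      finsum_eq_zero_of_forall_eq_zero fun j => if_neg (hd j)]

theorem substMonomial_one (hν : ν ≠ 0) : substMonomial ν (1 : PowerSeries R) = 1 := by
  rw [substMonomial_eq_substAlgHom hν, map_one]

theorem substMonomial_mul (hν : ν ≠ 0) (f g : PowerSeries R) :
    substMonomial ν (f * g) = substMonomial ν f * substMonomial ν g := by
  rw [substMonomial_eq_substAlgHom hν, map_mul]

theorem substMonomial_sub (hν : ν ≠ 0) (f g : PowerSeries R) :
    substMonomial ν (f - g) = substMonomial ν f - substMonomial ν g := by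
  rw [substMonomial_eq_substAlgHom hν, map_sub]

theorem constantCoeff_substMonomial (hν : ν ≠ 0) (f : PowerSeries R) :
    constantCoeff (substMonomial ν f) = PowerSeries.constantCoeff f := by
  simpa using coeff_substMonomial_nsmul hν 0 f

theorem le_order_substMonomial (hν : ν ≠ 0) {m : ℕ} {f : PowerSeries R}
    (hf : ∀ j, j * degree ν < m → PowerSeries.coeff j f = 0) :
    (m : ℕ∞) ≤ (substMonomial ν f).order := by
  refine nat_le_order fun d hd => ?_
  by_cases hex : ∃ j : ℕ, d = j • ν
  · obtain ⟨j, rfl⟩ := hex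
    rw [coeff_substMonomial_nsmul hν]
    exact hf j (by rwa [degree_nsmul] at hd)
  · exact coeff_substMonomial_of_forall_ne (not_exists.mp hex) f

end SubstMonomial

section ProductsNearOne

variable {σ ι R : Type*} [CommRing R]

theorem coeff_mul_of_degree_le_order {f : MvPowerSeries σ R} {d : σ →₀ ℕ}
    (hf : degree d ≤ f.order) (g : MvPowerSeries σ R) :
    coeff d (f * g) = coeff d f * constantCoeff g := by
  classical
  rw [coeff_mul, Finset.sum_eq_single (d, 0), coeff_zero_eq_constantCoeff_apply]
  · rintro ⟨e, e'⟩ hee' hne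
    rw [Finset.HasAntidiagonal.mem_antidiagonal] at hee'
    have he' : e' ≠ 0 := by rintro rfl; exact hne (by simpa using hee')
    have hlt : degree e < degree d := by
      rw [← hee', map_add]
      exact Nat.lt_add_of_pos_right (Nat.pos_of_ne_zero ((degree_eq_zero_iff e').not.mpr he'))
    rw [coeff_of_lt_order (lt_of_lt_of_le (by exact_mod_cast hlt) hf), zero_mul]
  · exact fun h => absurd (Finset.HasAntidiagonal.mem_antidiagonal.mpr (add_zero d)) h

theorem le_order_prod_sub_prod {a b : ι → MvPowerSeries σ R} {m : ℕ∞} (s : Finset ι)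
    (hab : ∀ i ∈ s, m ≤ (a i - b i).order) :
    m ≤ (∏ i ∈ s, a i - ∏ i ∈ s, b i).order := by
  classical
  induction s using Finset.induction_on with
  | empty => simp
  | insert j s hj ih =>
    rw [Finset.prod_insert hj, Finset.prod_insert hj,
      show a j * ∏ i ∈ s, a i - b j * ∏ i ∈ s, b i
        = (a j - b j) * ∏ i ∈ s, a i + b j * (∏ i ∈ s, a i - ∏ i ∈ s, b i) by ring]
    refine le_trans (le_min ?_ ?_) min_order_le_add
    · exact (hab j (Finset.mem_insert_self j s)).trans (le_self_add.trans le_order_mul)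
    · exact (ih fun i hi => hab i (Finset.mem_insert_of_mem hi)).trans
        (le_add_self.trans le_order_mul)

theorem coeff_prod_sub_prod {a b : ι → MvPowerSeries σ R} {d : σ →₀ ℕ} (s : Finset ι)
    (ha : ∀ i, constantCoeff (a i) = 1) (hb : ∀ i, constantCoeff (b i) = 1)
    (hab : ∀ i, degree d ≤ (a i - b i).order) :
    coeff d (∏ i ∈ s, a i - ∏ i ∈ s, b i) = ∑ i ∈ s, coeff d (a i - b i) := by
  classical
  induction s using Finset.induction_on with
  | empty => simp
  | insert j s hj ih =>
    rw [Finset.prod_insert hj, Finset.prod_insert hj, Finset.sum_insert hj,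
      show a j * ∏ i ∈ s, a i - b j * ∏ i ∈ s, b i
        = (a j - b j) * ∏ i ∈ s, a i + (∏ i ∈ s, a i - ∏ i ∈ s, b i) * b j by ring,
      map_add, coeff_mul_of_degree_le_order (hab j),
      coeff_mul_of_degree_le_order (le_order_prod_sub_prod s fun i _ => hab i), ih,
      map_prod]
    simp only [ha, hb, Finset.prod_const_one, mul_one]

theorem coeff_prod_of_subset [DecidableEq ι] {f : ι → MvPowerSeries σ R} {s t : Finset ι}
    (hst : s ⊆ t) {d : σ →₀ ℕ} (hf : ∀ i ∈ t \ s, degree d < (f i - 1).order) :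
    coeff d (∏ i ∈ t, f i) = coeff d (∏ i ∈ s, f i) := by
  rw [← Finset.prod_sdiff hst, mul_comm]
  convert coeff_mul_prod_one_sub_of_lt_order d (t \ s) _ (fun i => 1 - f i)
    (fun i hi => by rw [← neg_sub, order_neg]; exact hf i hi) using 4
  rw [sub_sub_cancel]

end ProductsNearOne

instance MvPowerSeries.instT2SpacePi {σ R : Type*} [TopologicalSpace R] [T2Space R] :
    T2Space (MvPowerSeries σ R) :=
  MvPowerSeries.WithPiTopology.instT2Space

instance MvPowerSeries.instIsTopologicalSemiringPi {σ R : Type*} [TopologicalSpace R] [Semiring R]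
    [IsTopologicalSemiring R] : IsTopologicalSemiring (MvPowerSeries σ R) :=
  MvPowerSeries.WithPiTopology.instIsTopologicalSemiring σ R

section InfiniteProducts

variable {σ ι R : Type*} [CommRing R] [TopologicalSpace R] [DiscreteTopology R]
  {f : ι → MvPowerSeries σ R}

theorem hasProd_of_finite_setOf_order_sub_one_le (hf : ∀ m : ℕ, {i | (f i - 1).order ≤ m}.Finite) :
    HasProd f fun d => coeff d (∏ i ∈ (hf (degree d)).toFinset, f i) := by
  classical
  refine tendsto_pi_nhds.mpr fun d => ?_
  rw [nhds_discrete, Filter.tendsto_pure]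
  filter_upwards [Filter.eventually_ge_atTop (hf (degree d)).toFinset] with t ht
  refine coeff_prod_of_subset ht fun i hi => lt_of_not_ge fun h => ?_
  exact (Finset.mem_sdiff.mp hi).2 ((hf _).mem_toFinset.mpr h)

theorem coeff_tprod_of_finite_setOf_order_sub_one_le
    (hf : ∀ m : ℕ, {i | (f i - 1).order ≤ m}.Finite) {s : Finset ι} {d : σ →₀ ℕ}
    (hs : ∀ i ∉ s, degree d < (f i - 1).order) :
    coeff d (∏' i, f i) = coeff d (∏ i ∈ s, f i) := by
  classical
  set t := (hf (degree d)).toFinset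
  have ht : ∀ i ∉ t, degree d < (f i - 1).order := fun i hi =>
    lt_of_not_ge fun h => hi ((hf _).mem_toFinset.mpr h)
  rw [(hasProd_of_finite_setOf_order_sub_one_le hf).tprod_eq]
  change coeff d (∏ i ∈ t, f i) = _
  rw [← coeff_prod_of_subset (Finset.subset_union_left (s₂ := s)) fun i hi => ?_,
    coeff_prod_of_subset (Finset.subset_union_right (s₁ := t)) fun i hi => ?_]
  · exact hs i (Finset.mem_sdiff.mp hi).2
  · exact ht i (Finset.mem_sdiff.mp hi).2

end InfiniteProducts

section Primitive

variable {n : ℕ} {μ ν : Fin n →₀ ℕ}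

theorem IsPrimitive.ne_zero (hμ : IsPrimitive μ) : μ ≠ 0 := by
  rintro rfl
  exact zero_ne_one ((Finset.gcd_eq_zero_iff.mpr fun _ _ => rfl).symm.trans hμ)

theorem IsPrimitive.gcd_nsmul (hμ : IsPrimitive μ) (i : ℕ) : Finset.univ.gcd ⇑(i • μ) = i := by
  rw [coe_smul, show i • ⇑μ = fun k => i * μ k from rfl, Finset.gcd_mul_left, hμ, normalize_eq,
    mul_one]

theorem IsPrimitive.eq_of_nsmul_eq_nsmul (hμ : IsPrimitive μ) (hν : IsPrimitive ν) {i j : ℕ}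
    (hi : i ≠ 0) (h : i • μ = j • ν) : μ = ν := by
  obtain rfl : i = j := by rw [← hμ.gcd_nsmul i, h, hν.gcd_nsmul]
  exact IsAddTorsionFree.nsmul_right_injective hi h

theorem exists_isPrimitive_nsmul_eq {d : Fin n →₀ ℕ} (hd : d ≠ 0) :
    ∃ μ, IsPrimitive μ ∧ ∃ i : ℕ, i • μ = d := by
  obtain ⟨k, -⟩ := support_nonempty_iff.mpr hd
  obtain ⟨g, hdg, hg⟩ := Finset.extract_gcd ⇑d ⟨k, Finset.mem_univ k⟩
  refine ⟨equivFunOnFinite.symm g, by simpa [IsPrimitive] using hg, Finset.univ.gcd ⇑d, ?_⟩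
  ext k
  simp [hdg k]

end Primitive

abbrev PrimitiveIndex (n : ℕ) : Type := {μ : Fin n →₀ ℕ // IsPrimitive μ}

section WittProduct

variable {R : Type*} [CommRing R] {n : ℕ}

theorem mem_Lambda {f : PowerSeries R} : f ∈ Lambda R ↔ PowerSeries.constantCoeff f = 1 :=
  Iff.rfl

theorem le_order_substMonomial_sub_one {ν : Fin n →₀ ℕ} (hν : ν ≠ 0) {f : PowerSeries R}
    (hf : f ∈ Lambda R) : degree ν ≤ (substMonomial ν f - 1).order := by
  rw [← substMonomial_one hν, ← substMonomial_sub hν]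
  refine le_order_substMonomial hν fun j hj => ?_
  obtain rfl : j = 0 := by
    by_contra hj0
    exact hj.not_ge (Nat.le_mul_of_pos_left _ (Nat.pos_of_ne_zero hj0))
  simpa [sub_eq_zero] using mem_Lambda.mp hf

noncomputable def primitiveIndicesDegreeLE (n m : ℕ) : Finset (PrimitiveIndex n) :=
  ((finite_of_degree_le m).preimage Subtype.val_injective.injOn).toFinset

theorem mem_primitiveIndicesDegreeLE {m : ℕ} {μ : PrimitiveIndex n} :
    μ ∈ primitiveIndicesDegreeLE n m ↔ degree μ.1 ≤ m := by
  simp [primitiveIndicesDegreeLE]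

theorem finite_setOf_order_substMonomial_sub_one_le (F : PrimitiveIndex n → Lambda R) (m : ℕ) :
    {μ : PrimitiveIndex n | (substMonomial μ.1 (F μ : PowerSeries R) - 1).order ≤ m}.Finite :=
  (primitiveIndicesDegreeLE n m).finite_toSet.subset fun μ hμ => mem_primitiveIndicesDegreeLE.mpr
    (by exact_mod_cast (le_order_substMonomial_sub_one μ.2.ne_zero (F μ).2).trans hμ)

variable [TopologicalSpace R]

noncomputable def prodSubstMonomial (F : PrimitiveIndex n → Lambda R) : MvPowerSeries (Fin n) R :=
  ∏' μ, substMonomial μ.1 (F μ : PowerSeries R)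

noncomputable def lambdaOfCoeffs (w : (Fin n →₀ ℕ) → R) : PrimitiveIndex n → Lambda R :=
  fun μ => ⟨PowerSeries.mk fun i => if i = 0 then 1 else w (i • μ.1), mem_Lambda.mpr (by simp)⟩

theorem prodSubstMonomial_one : prodSubstMonomial (1 : PrimitiveIndex n → Lambda R) = 1 := by
  simp only [prodSubstMonomial, Pi.one_apply, OneMemClass.coe_one,
    fun μ : PrimitiveIndex n => substMonomial_one (R := R) μ.2.ne_zero, tprod_one]

variable [DiscreteTopology R]

theorem multipliable_substMonomial (F : PrimitiveIndex n → Lambda R) :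
    Multipliable fun μ : PrimitiveIndex n => substMonomial μ.1 (F μ : PowerSeries R) :=
  (hasProd_of_finite_setOf_order_sub_one_le
    (finite_setOf_order_substMonomial_sub_one_le F)).multipliable

theorem coeff_prodSubstMonomial (F : PrimitiveIndex n → Lambda R) (d : Fin n →₀ ℕ) :
    coeff d (prodSubstMonomial F) = coeff d (∏ μ ∈ primitiveIndicesDegreeLE n (degree d),
      substMonomial μ.1 (F μ : PowerSeries R)) :=
  coeff_tprod_of_finite_setOf_order_sub_one_le (finite_setOf_order_substMonomial_sub_one_le F)
    fun μ hμ => lt_of_lt_of_le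
      (by exact_mod_cast not_le.mp (mt mem_primitiveIndicesDegreeLE.mpr hμ))
      (le_order_substMonomial_sub_one μ.2.ne_zero (F μ).2)

theorem constantCoeff_prodSubstMonomial (F : PrimitiveIndex n → Lambda R) :
    constantCoeff (prodSubstMonomial F) = 1 := by
  rw [← coeff_zero_eq_constantCoeff_apply, coeff_prodSubstMonomial,
    coeff_zero_eq_constantCoeff_apply, map_prod]
  exact Finset.prod_eq_one fun μ _ => (constantCoeff_substMonomial μ.2.ne_zero _).trans (F μ).2

theorem prodSubstMonomial_mul (F G : PrimitiveIndex n → Lambda R) :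
    prodSubstMonomial (F * G) = prodSubstMonomial F * prodSubstMonomial G := by
  simp only [prodSubstMonomial, Pi.mul_apply, Submonoid.coe_mul,
    fun μ : PrimitiveIndex n => substMonomial_mul (R := R) μ.2.ne_zero]
  exact (multipliable_substMonomial F).tprod_mul (multipliable_substMonomial G)

end WittProduct

section Bijectivity

variable {R : Type*} [CommRing R] [TopologicalSpace R] [DiscreteTopology R] {n : ℕ}

theorem coeff_nsmul_prodSubstMonomial_sub (F G : PrimitiveIndex n → Lambda R)
    (μ : PrimitiveIndex n) {i : ℕ} (hi : i ≠ 0)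
    (hFG : ∀ ν j, j * degree ν.1 < i * degree μ.1 →
      PowerSeries.coeff j (F ν : PowerSeries R) = PowerSeries.coeff j (G ν : PowerSeries R)) :
    coeff (i • μ.1) (prodSubstMonomial F) - coeff (i • μ.1) (prodSubstMonomial G)
      = PowerSeries.coeff i (F μ : PowerSeries R) - PowerSeries.coeff i (G μ : PowerSeries R) := by
  have hconst (H : PrimitiveIndex n → Lambda R) (ν : PrimitiveIndex n) :
      constantCoeff (substMonomial ν.1 (H ν : PowerSeries R)) = 1 :=
    (constantCoeff_substMonomial ν.2.ne_zero _).trans (H ν).2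
  have horder (ν : PrimitiveIndex n) : degree (i • μ.1) ≤ (substMonomial ν.1 (F ν : PowerSeries R)
      - substMonomial ν.1 (G ν : PowerSeries R)).order := by
    rw [← substMonomial_sub ν.2.ne_zero, degree_nsmul]
    exact le_order_substMonomial ν.2.ne_zero fun j hj => by rw [map_sub, hFG ν j hj, sub_self]
  have hμ : μ ∈ primitiveIndicesDegreeLE n (degree (i • μ.1)) := by
    rw [mem_primitiveIndicesDegreeLE, degree_nsmul]
    exact Nat.le_mul_of_pos_left _ (Nat.pos_of_ne_zero hi)
  rw [coeff_prodSubstMonomial F, coeff_prodSubstMonomial G, ← map_sub,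
    coeff_prod_sub_prod _ (hconst F) (hconst G) horder,
    Finset.sum_eq_single_of_mem μ hμ fun ν _ hνμ => ?_,
    ← substMonomial_sub μ.2.ne_zero, coeff_substMonomial_nsmul μ.2.ne_zero, map_sub]
  rw [← substMonomial_sub ν.2.ne_zero]
  exact coeff_substMonomial_of_forall_ne
    (fun j h => hνμ (Subtype.ext (μ.2.eq_of_nsmul_eq_nsmul ν.2 hi h).symm)) _

theorem prodSubstMonomial_injective :
    Function.Injective (prodSubstMonomial : (PrimitiveIndex n → Lambda R) → _) := by
  intro F G h
  suffices ∀ m μ i, i * degree (μ : PrimitiveIndex n).1 = m →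
      PowerSeries.coeff i (F μ : PowerSeries R) = PowerSeries.coeff i (G μ : PowerSeries R) from
    funext fun μ => Subtype.ext (PowerSeries.ext fun i => this _ μ i rfl)
  intro m
  induction m using Nat.strong_induction_on with
  | _ m ih =>
    rintro μ i rfl
    rcases eq_or_ne i 0 with rfl | hi
    · simp only [PowerSeries.coeff_zero_eq_constantCoeff_apply, mem_Lambda.mp (F μ).2,
        mem_Lambda.mp (G μ).2]
    · have hcoeff := coeff_nsmul_prodSubstMonomial_sub F G μ hi fun ν j hj => ih _ hj ν j rfl
      rwa [h, sub_self, eq_comm, sub_eq_zero] at hcoeff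

noncomputable def preimageCoeff (G : MvPowerSeries (Fin n) R) (d : Fin n →₀ ℕ) : R :=
  coeff d G - coeff d (prodSubstMonomial (lambdaOfCoeffs fun e =>
    if degree e < degree d then preimageCoeff G e else 0))
termination_by degree d

theorem prodSubstMonomial_lambdaOfCoeffs_preimageCoeff {G : MvPowerSeries (Fin n) R}
    (hG : constantCoeff G = 1) : prodSubstMonomial (lambdaOfCoeffs (preimageCoeff G)) = G := by
  ext d
  rcases eq_or_ne d 0 with rfl | hd
  · simp only [coeff_zero_eq_constantCoeff_apply, constantCoeff_prodSubstMonomial, hG]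
  obtain ⟨μ, hμ, i, rfl⟩ := exists_isPrimitive_nsmul_eq hd
  have hi : i ≠ 0 := by rintro rfl; exact hd (zero_smul ℕ μ)
  have hcoeff := coeff_nsmul_prodSubstMonomial_sub (lambdaOfCoeffs (preimageCoeff G))
    (lambdaOfCoeffs fun e => if degree e < degree (i • μ) then preimageCoeff G e else 0)
    ⟨μ, hμ⟩ hi fun ν j hj => by simp [lambdaOfCoeffs, degree_nsmul, hj]
  simp only [lambdaOfCoeffs, PowerSeries.coeff_mk, if_neg hi, lt_irrefl, if_false, sub_zero]
    at hcoeff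
  rw [preimageCoeff] at hcoeff
  linear_combination hcoeff

noncomputable def prodSubstMonomialHom : (PrimitiveIndex n → Lambda R) →* LambdaN n R where
  toFun F := ⟨prodSubstMonomial F, constantCoeff_prodSubstMonomial F⟩
  map_one' := Subtype.ext prodSubstMonomial_one
  map_mul' F G := Subtype.ext (prodSubstMonomial_mul F G)

theorem prodSubstMonomialHom_bijective :
    Function.Bijective (prodSubstMonomialHom : (PrimitiveIndex n → Lambda R) →* LambdaN n R) :=
  ⟨fun _ _ h => prodSubstMonomial_injective (congrArg Subtype.val h), fun G =>
    ⟨_, Subtype.ext (prodSubstMonomial_lambdaOfCoeffs_preimageCoeff G.2)⟩⟩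

end Bijectivity

theorem lambdaN_iso_prod_lambda_general
    (R : Type*) [CommRing R] [TopologicalSpace R] [DiscreteTopology R]
    (n : ℕ) :
    (∀ F : {μ : Fin n →₀ ℕ // IsPrimitive μ} → Lambda R,
      Multipliable (fun μ : {μ : Fin n →₀ ℕ // IsPrimitive μ} =>
        substMonomial μ.1 ((F μ : PowerSeries R)))) ∧
    ∃ e : ({μ : Fin n →₀ ℕ // IsPrimitive μ} → Lambda R) ≃* LambdaN n R,
      ∀ F : {μ : Fin n →₀ ℕ // IsPrimitive μ} → Lambda R,
        ((e F : LambdaN n R) : MvPowerSeries (Fin n) R)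
          = ∏' μ : {μ : Fin n →₀ ℕ // IsPrimitive μ},
              substMonomial μ.1 ((F μ : PowerSeries R)) :=
  ⟨multipliable_substMonomial, MulEquiv.ofBijective _ prodSubstMonomialHom_bijective, fun _ => rfl⟩

/-- The map `(f_μ)_μ ↦ ∏_μ f_μ(t^μ)`, over the primitive multi-indices `μ`,
is a group isomorphism from the direct product `∏_{μ primitive} Λ(R)` onto
`Λⁿ(R)`: every such family is multipliable (in the coefficientwise topology,
the coefficient ring being discrete), and there is a multiplicative equivalence
given by the infinite product. -/
theorem lambdaN_iso_prod_lambda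
    (R : Type*) [CommRing R] [TopologicalSpace R] [DiscreteTopology R]
    (n : ℕ) (hn : 1 ≤ n) :
    (∀ F : {μ : Fin n →₀ ℕ // IsPrimitive μ} → Lambda R,
      Multipliable (fun μ : {μ : Fin n →₀ ℕ // IsPrimitive μ} =>
        substMonomial μ.1 ((F μ : PowerSeries R)))) ∧
    ∃ e : ({μ : Fin n →₀ ℕ // IsPrimitive μ} → Lambda R) ≃* LambdaN n R,
      ∀ F : {μ : Fin n →₀ ℕ // IsPrimitive μ} → Lambda R,
        ((e F : LambdaN n R) : MvPowerSeries (Fin n) R)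
          = ∏' μ : {μ : Fin n →₀ ℕ // IsPrimitive μ},
              substMonomial μ.1 ((F μ : PowerSeries R)) :=
  lambdaN_iso_prod_lambda_general R n
end
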